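/- Let B₁ and B₂ be Boolean algebras and h : B₁ → B₂ a Boolean isomorphism. Then its canonical extension h^σ : 𝒫(Uf(B₁)) → 𝒫(Uf(B₂)) is a Boolean algebra isomorphism between the powerset Boolean algebras 𝒫(Uf(B₁)) and 𝒫(Uf(B₂)). -/

import Mathlib

/-! An isomorphism `h` induces a bijection `g : Uf B₂ → Uf B₁`, `u ↦ h⁻¹(u)`, and `h^σ` is just
the preimage map `A ↦ g⁻¹(A)`. Indeed, a filter `F` with `⋂_{a ∈ F} φ₁ a ⊆ A` and `F ⊆ h⁻¹(u)`
forces `g u ∈ A`; conversely `F = g u` itself is admissible when `g u ∈ A`, because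
`⋂_{a ∈ v} φ a = {v}` for every ultrafilter `v` by maximality. Taking preimages along a bijection
is an isomorphism of powerset Boolean algebras. -/

/-- A (lattice) filter of a Boolean algebra: a nonempty, upward-closed subset
closed under binary meets. -/
def IsLatFilter {B : Type*} [BooleanAlgebra B] (F : Set B) : Prop :=
  F.Nonempty ∧ (∀ a b : B, a ∈ F → a ≤ b → b ∈ F) ∧ (∀ a b : B, a ∈ F → b ∈ F → a ⊓ b ∈ F)

/-- A (lattice) ideal of a Boolean algebra: a nonempty, downward-closed subset
closed under binary joins. -/
def IsLatIdeal {B : Type*} [BooleanAlgebra B] (I : Set B) : Prop :=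
  I.Nonempty ∧ (∀ a b : B, a ∈ I → b ≤ a → b ∈ I) ∧ (∀ a b : B, a ∈ I → b ∈ I → a ⊔ b ∈ I)

/-- An ultrafilter of a Boolean algebra: a maximal proper filter. -/
def IsUf {B : Type*} [BooleanAlgebra B] (F : Set B) : Prop :=
  IsLatFilter F ∧ F ≠ Set.univ ∧
    ∀ G : Set B, IsLatFilter G → G ≠ Set.univ → F ⊆ G → F = G

/-- `Uf B` is the set (type) of ultrafilters of the Boolean algebra `B`. -/
def Uf (B : Type*) [BooleanAlgebra B] : Type _ := {F : Set B // IsUf F}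

/-- The Stone map `φ_B : B → 𝒫(Uf B)`, `φ_B a = {u ∈ Uf B : a ∈ u}`. -/
def stoneMap (B : Type*) [BooleanAlgebra B] : B → Set (Uf B) := fun a => {u : Uf B | a ∈ u.1}

/-- The canonical extension of a map `h : B₁ → B₂`:
`h^σ(A) = ⋃ { ⋂_{a ∈ F} φ₂(h a) : F a filter of B₁ with ⋂_{a ∈ F} φ₁ a ⊆ A }`. -/
def canExt {B₁ B₂ : Type*} [BooleanAlgebra B₁] [BooleanAlgebra B₂] (h : B₁ → B₂)
    (A : Set (Uf B₁)) : Set (Uf B₂) :=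
  ⋃ F ∈ {F : Set B₁ | IsLatFilter F ∧ (⋂ a ∈ F, stoneMap B₁ a) ⊆ A},
    ⋂ a ∈ F, stoneMap B₂ (h a)

section UltrafilterTransport

variable {B B₁ B₂ : Type*} [BooleanAlgebra B] [BooleanAlgebra B₁] [BooleanAlgebra B₂]

lemma IsLatFilter.preimage_orderIso (e : B₁ ≃o B₂) {F : Set B₂} (hF : IsLatFilter F) :
    IsLatFilter (e ⁻¹' F) := by
  obtain ⟨⟨x, hx⟩, hup, hinf⟩ := hF
  refine ⟨⟨e.symm x, by simpa using hx⟩, fun a b ha hab => hup _ _ ha (e.monotone hab), ?_⟩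
  intro a b ha hb
  simpa [Set.mem_preimage, map_inf] using hinf _ _ ha hb

lemma IsUf.preimage_orderIso (e : B₁ ≃o B₂) {F : Set B₂} (hF : IsUf F) : IsUf (e ⁻¹' F) := by
  obtain ⟨hFfilter, hFproper, hFmax⟩ := hF
  refine ⟨hFfilter.preimage_orderIso e, (Set.preimage_injective.2 e.surjective).ne hFproper, ?_⟩
  intro G hG hGproper hFG
  have hF_eq : F = e.symm ⁻¹' G := by
    refine hFmax _ (hG.preimage_orderIso e.symm)
      ((Set.preimage_injective.2 e.symm.surjective).ne hGproper) ?_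
    rw [← e.symm_preimage_preimage F]
    exact Set.preimage_mono hFG
  rw [hF_eq, e.preimage_symm_preimage]

def Uf.congr (e : B₁ ≃o B₂) : Uf B₂ ≃ Uf B₁ where
  toFun u := ⟨e ⁻¹' u.1, u.2.preimage_orderIso e⟩
  invFun u := ⟨e.symm ⁻¹' u.1, u.2.preimage_orderIso e.symm⟩
  left_inv u := Subtype.ext (e.symm_preimage_preimage u.1)
  right_inv u := Subtype.ext (e.preimage_symm_preimage u.1)

lemma biInter_stoneMap_eq_singleton (u : Uf B) : ⋂ a ∈ u.1, stoneMap B a = {u} := by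
  ext v
  simp only [Set.mem_iInter₂, stoneMap, Set.mem_ofPred_eq, Set.mem_singleton_iff]
  refine ⟨fun huv => Subtype.ext (u.2.2.2 v.1 v.2.1 v.2.2.1 huv).symm, ?_⟩
  rintro rfl
  exact fun _ => id

lemma canExt_eq_preimage (h : B₁ → B₂) (g : Uf B₂ → Uf B₁) (hg : ∀ u, (g u).1 = h ⁻¹' u.1)
    (A : Set (Uf B₁)) : canExt h A = g ⁻¹' A := by
  ext u
  simp only [canExt, Set.mem_iUnion, Set.mem_ofPred_eq, exists_prop, Set.mem_preimage]
  constructor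
  · rintro ⟨F, ⟨-, hFA⟩, hu⟩
    refine hFA (Set.mem_iInter₂.2 fun a ha => ?_)
    show a ∈ (g u).1
    rw [hg]
    exact Set.mem_iInter₂.1 hu a ha
  · intro hu
    refine ⟨(g u).1, ⟨(g u).2.1, ?_⟩, Set.mem_iInter₂.2 fun a ha => ?_⟩
    · rwa [biInter_stoneMap_eq_singleton, Set.singleton_subset_iff]
    · rwa [hg] at ha

end UltrafilterTransport

/-- If a Boolean homomorphism `h : B₁ → B₂` is an isomorphism (a bijective
Boolean homomorphism), then its canonical extension `h^σ : 𝒫(Uf B₁) → 𝒫(Uf B₂)` is a Boolean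
algebra isomorphism between the powerset Boolean algebras: it is bijective and preserves
intersections, unions, complements, `∅` and the whole set. -/
theorem canExt_isomorphism {B₁ B₂ : Type*} [BooleanAlgebra B₁] [BooleanAlgebra B₂]
    (h : BoundedLatticeHom B₁ B₂) (hbij : Function.Bijective h) :
    Function.Bijective (canExt (⇑h)) ∧
    (∀ A A' : Set (Uf B₁), canExt (⇑h) (A ∩ A') = canExt (⇑h) A ∩ canExt (⇑h) A') ∧
    (∀ A A' : Set (Uf B₁), canExt (⇑h) (A ∪ A') = canExt (⇑h) A ∪ canExt (⇑h) A') ∧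
    (∀ A : Set (Uf B₁), canExt (⇑h) Aᶜ = (canExt (⇑h) A)ᶜ) ∧
    canExt (⇑h) (∅ : Set (Uf B₁)) = (∅ : Set (Uf B₂)) ∧
    canExt (⇑h) (Set.univ : Set (Uf B₁)) = (Set.univ : Set (Uf B₂)) := by
  let e : B₁ ≃o B₂ := OrderIso.ofSurjective (orderEmbeddingOfInjective h hbij.1) hbij.2
  have hσ : canExt h = (Uf.congr e ⁻¹' ·) :=
    funext (canExt_eq_preimage h (Uf.congr e) fun _ => rfl)
  rw [hσ]
  exact ⟨⟨Set.preimage_injective.mpr (Uf.congr e).surjective,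
      Set.preimage_surjective.mpr (Uf.congr e).injective⟩,
    fun _ _ => rfl, fun _ _ => rfl, fun _ => rfl, rfl, rfl⟩
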